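/- arXiv:1605.01875 — 3 statements merged into one kernel-verified Lean document; each statement's English description precedes it below -/
import Mathlib

section
/- If nonnegative reals σ₁, σ₂ satisfy (σ₁ - σ₂)² = 4(σ₁ + σ₂/2), σ₁ is a nonnegative multiple of 4, and σ₂ is a nonnegative multiple of 2, then there exists an integer m such that either (σ₁, σ₂) = (2m(3m-1), 2(3m-1)(m-1)) or (σ₁, σ₂) = (2(3m-2)(m-1), 2(3m-5)(m-1)). -/
/-- Algebraic classification of blow-up local masses for the Tzitzéica equation. -/
theorem tzitzeica_mass_classification (σ₁ σ₂ : ℝ) (h1 : 0 ≤ σ₁) (h2 : 0 ≤ σ₂)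
    (hpoh : (σ₁ - σ₂) ^ 2 = 4 * (σ₁ + σ₂ / 2))
    (hmul1 : ∃ n : ℕ, σ₁ = 4 * n) (hmul2 : ∃ n : ℕ, σ₂ = 2 * n) :
    ∃ m : ℤ,
      (σ₁ = 2 * m * (3 * m - 1) ∧ σ₂ = 2 * (3 * m - 1) * (m - 1)) ∨
      (σ₁ = 2 * (3 * m - 2) * (m - 1) ∧ σ₂ = 2 * (3 * m - 5) * (m - 1)) := by
  obtain ⟨a, ha⟩ := hmul1
  obtain ⟨b, hb⟩ := hmul2
  subst ha hb
  -- integer version of the Pohozaev identity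
  have hZ : (2 * (a : ℤ) - b) ^ 2 = 4 * a + b := by
    have h : ((2 * (a : ℤ) - b : ℤ) : ℝ) ^ 2 = ((4 * (a : ℤ) + b : ℤ) : ℝ) := by
      push_cast
      nlinarith [hpoh]
    exact_mod_cast h
  set k : ℤ := 2 * (a : ℤ) - b with hk
  have hk6 : k ^ 2 + k = 6 * a := by
    rw [hk]; nlinarith [hZ]
  have h3 : (3 : ℤ) ∣ k * (k + 1) := by
    have : k * (k + 1) = 6 * a := by ring_nf; ring_nf at hk6; linarith
    rw [this]; exact ⟨2 * a, by ring⟩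
  have hp : Prime (3 : ℤ) := Int.prime_three
  rcases hp.dvd_mul.mp h3 with ⟨t, ht⟩ | ⟨t, ht⟩
  · -- k = 3t, use m = t + 1, so k = 3m - 3
    refine ⟨t + 1, Or.inr ?_⟩
    have h2a : 2 * (a : ℤ) = 3 * t ^ 2 + t := by nlinarith [hk6, ht]
    have hbk : (b : ℤ) = 2 * a - k := by rw [hk]; ring
    constructor
    · have : (4 : ℤ) * a = 2 * (3 * (t + 1) - 2) * ((t + 1) - 1) := by nlinarith [h2a]
      exact_mod_cast congrArg (fun z : ℤ => (z : ℝ)) this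
    · have : (2 : ℤ) * b = 2 * (3 * (t + 1) - 5) * ((t + 1) - 1) := by
        rw [hbk, ht]; nlinarith [h2a]
      exact_mod_cast congrArg (fun z : ℤ => (z : ℝ)) this
  · -- k + 1 = 3t, use m = t, so k = 3m - 1
    refine ⟨t, Or.inl ?_⟩
    have hkt : k = 3 * t - 1 := by omega
    have h2a : 2 * (a : ℤ) = 3 * t ^ 2 - t := by nlinarith [hk6, hkt]
    have hbk : (b : ℤ) = 2 * a - k := by rw [hk]; ring
    constructor
    · have : (4 : ℤ) * a = 2 * t * (3 * t - 1) := by nlinarith [h2a]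
      exact_mod_cast congrArg (fun z : ℤ => (z : ℝ)) this
    · have : (2 : ℤ) * b = 2 * (3 * t - 1) * (t - 1) := by
        rw [hbk, hkt]; nlinarith [h2a]
      exact_mod_cast congrArg (fun z : ℤ => (z : ℝ)) this
end

section
/- Let u(x) = log( Σ_{i=1}^{k} t_i (1 + λ² d(x,x_i)²)^{-2} ) where t_i ≥ 0, Σ t_i = 1, λ > 0, and d is the distance on a Riemannian manifold M with |∇ d²(·, x_i)| ≤ 2 d(·, x_i). Then |∇u(x)| ≤ 4 / min_{i=1,...,k} d(x, x_i) for every x with min_i d(x,x_i) > 0. -/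
/-!
Write `b_i = (1 + λ² d(·, x_i)²)⁻²` for the bubbles. Since `∇ d(·, x_i)² = 2 (· - x_i)`,
`|∇ b_i| = 4 λ² d_i / (1 + λ² d_i²)³ ≤ (4 / d_i) b_i`, the last step being
`λ² d_i² ≤ 1 + λ² d_i²`. Hence the gradient of `S = ∑ t_i b_i` satisfies
`|∇ S| ≤ (4 / min_i d_i) S`, and `∇ log S = ∇ S / S`.
-/

open Finset

section

variable {F : Type*} [NormedAddCommGroup F] [NormedSpace ℝ F]

theorem norm_fderiv_log_le {f : F → ℝ} {f' : F →L[ℝ] ℝ} {x : F} {C : ℝ}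
    (hf : HasFDerivAt f f' x) (hpos : 0 < f x) (hbound : ‖f'‖ ≤ C * f x) :
    ‖fderiv ℝ (fun y => Real.log (f y)) x‖ ≤ C := by
  rw [(hf.log hpos.ne').fderiv, norm_smul, Real.norm_eq_abs, abs_inv, abs_of_pos hpos,
    inv_mul_le_iff₀ hpos, mul_comm]
  exact hbound

theorem norm_sum_smul_le_mul_sum {ι : Type*} (s : Finset ι) {t b : ι → ℝ} {g : ι → F}
    {C : ℝ} (ht : ∀ i, 0 ≤ t i) (hg : ∀ i, ‖g i‖ ≤ C * b i) :
    ‖∑ i ∈ s, t i • g i‖ ≤ C * ∑ i ∈ s, t i * b i := by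
  calc ‖∑ i ∈ s, t i • g i‖ ≤ ∑ i ∈ s, t i * ‖g i‖ := by
        refine (norm_sum_le _ _).trans_eq (sum_congr rfl fun i _ => ?_)
        rw [norm_smul, Real.norm_eq_abs, abs_of_nonneg (ht i)]
    _ ≤ ∑ i ∈ s, t i * (C * b i) :=
        sum_le_sum fun i _ => mul_le_mul_of_nonneg_left (hg i) (ht i)
    _ = C * ∑ i ∈ s, t i * b i := by
        rw [mul_sum]
        exact sum_congr rfl fun i _ => mul_left_comm _ _ _

theorem sum_mul_pos_of_sum_pos {ι : Type*} (s : Finset ι) {t b : ι → ℝ}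
    (ht : ∀ i, 0 ≤ t i) (hsum : 0 < ∑ i ∈ s, t i) (hb : ∀ i, 0 < b i) :
    0 < ∑ i ∈ s, t i * b i := by
  obtain ⟨j, hj, htj⟩ := exists_lt_of_sum_lt (f := 0) (g := t) (by simpa using hsum)
  exact sum_pos' (fun i _ => mul_nonneg (ht i) (hb i).le) ⟨j, hj, mul_pos htj (hb j)⟩

end

section Bubble

noncomputable def bubble {X : Type*} [PseudoMetricSpace X] (lam : ℝ) (q y : X) : ℝ :=
  ((1 + lam ^ 2 * dist y q ^ 2) ^ 2)⁻¹

theorem bubble_pos {X : Type*} [PseudoMetricSpace X] (lam : ℝ) (q y : X) :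
    0 < bubble lam q y := by
  unfold bubble
  positivity

variable {E : Type*} [NormedAddCommGroup E] [InnerProductSpace ℝ E]

theorem hasFDerivAt_dist_sq (q x : E) :
    HasFDerivAt (fun y => dist y q ^ 2) ((2 : ℝ) • innerSL ℝ (x - q)) x := by
  simpa only [dist_eq_norm, id, ContinuousLinearMap.comp_id, ofNat_smul_eq_nsmul] using
    ((hasFDerivAt_id x).sub_const q).norm_sq

theorem hasFDerivAt_bubble (lam : ℝ) (q x : E) :
    HasFDerivAt (bubble lam q)
      ((-(4 * lam ^ 2) / (1 + lam ^ 2 * dist x q ^ 2) ^ 3) • innerSL ℝ (x - q)) x := by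
  have hprofile : HasDerivAt (fun s : ℝ => ((1 + lam ^ 2 * s) ^ 2)⁻¹)
      (-(2 * (1 + lam ^ 2 * dist x q ^ 2) * lam ^ 2) / ((1 + lam ^ 2 * dist x q ^ 2) ^ 2) ^ 2)
      (dist x q ^ 2) := by
    have hlin := ((hasDerivAt_id (dist x q ^ 2)).const_mul (lam ^ 2)).const_add 1
    have : 1 + lam ^ 2 * dist x q ^ 2 ≠ 0 := by positivity
    simpa using (hlin.fun_pow 2).fun_inv (by positivity)
  refine (hprofile.comp_hasFDerivAt x (hasFDerivAt_dist_sq q x)).congr_fderiv ?_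
  have : 0 < 1 + lam ^ 2 * dist x q ^ 2 := by positivity
  rw [smul_smul]
  congr 1
  field_simp
  ring

theorem norm_fderiv_bubble_le (lam : ℝ) (q x : E) :
    ‖fderiv ℝ (bubble lam q) x‖ ≤ 4 / dist x q * bubble lam q x := by
  have ha : 0 < 1 + lam ^ 2 * dist x q ^ 2 := by positivity
  rw [(hasFDerivAt_bubble lam q x).fderiv, norm_smul, innerSL_apply_norm, ← dist_eq_norm,
    Real.norm_eq_abs, abs_div, abs_of_pos (pow_pos ha 3), abs_neg,
    abs_of_nonneg (by positivity : 0 ≤ 4 * lam ^ 2), bubble]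
  rcases (dist_nonneg (x := x) (y := q)).eq_or_lt with hd | hd
  · -- at `x = q` both sides vanish, the right one through `4 / 0 = 0`
    simp [← hd]
  · have hratio : lam ^ 2 * dist x q ^ 2 / (1 + lam ^ 2 * dist x q ^ 2) ≤ 1 :=
      (div_le_one ha).2 (by linarith)
    calc 4 * lam ^ 2 / (1 + lam ^ 2 * dist x q ^ 2) ^ 3 * dist x q
        = 4 / dist x q * ((1 + lam ^ 2 * dist x q ^ 2) ^ 2)⁻¹ *
            (lam ^ 2 * dist x q ^ 2 / (1 + lam ^ 2 * dist x q ^ 2)) := by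
          field_simp
      _ ≤ 4 / dist x q * ((1 + lam ^ 2 * dist x q ^ 2) ^ 2)⁻¹ :=
          mul_le_of_le_one_right (by positivity) hratio

end Bubble

theorem bubble_gradient_estimate_dmin_general
    (k : ℕ) (t : Fin (k + 1) → ℝ) (ht : ∀ i, 0 ≤ t i) (hsum : ∑ i, t i = 1)
    (lam : ℝ)
    (p : Fin (k + 1) → EuclideanSpace ℝ (Fin 2))
    (u : EuclideanSpace ℝ (Fin 2) → ℝ)
    (hu : ∀ y, u y = Real.log (∑ i, t i * ((1 + lam ^ 2 * dist y (p i) ^ 2) ^ 2)⁻¹))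
    (x : EuclideanSpace ℝ (Fin 2))
    (hx : 0 < (univ : Finset (Fin (k + 1))).inf' univ_nonempty (fun i => dist x (p i))) :
    ‖fderiv ℝ u x‖ ≤ 4 / (univ : Finset (Fin (k + 1))).inf' univ_nonempty
      (fun i => dist x (p i)) := by
  set m := (univ : Finset (Fin (k + 1))).inf' univ_nonempty (fun i => dist x (p i))
  have hS : HasFDerivAt (fun y => ∑ i, t i * bubble lam (p i) y)
      (∑ i, t i • fderiv ℝ (bubble lam (p i)) x) x :=
    HasFDerivAt.fun_sum fun i _ =>
      ((hasFDerivAt_bubble lam (p i) x).differentiableAt.hasFDerivAt).const_mul (t i)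
  have hS_pos : 0 < ∑ i, t i * bubble lam (p i) x :=
    sum_mul_pos_of_sum_pos _ ht (by simp [hsum]) fun i => bubble_pos lam (p i) x
  rw [show u = fun y => Real.log (∑ i, t i * bubble lam (p i) y) from funext hu]
  refine norm_fderiv_log_le hS hS_pos (norm_sum_smul_le_mul_sum _ ht fun i => ?_)
  calc ‖fderiv ℝ (bubble lam (p i)) x‖ ≤ 4 / dist x (p i) * bubble lam (p i) x :=
        norm_fderiv_bubble_le lam (p i) x
    _ ≤ 4 / m * bubble lam (p i) x := by
        gcongr
        · exact (bubble_pos lam _ _).le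
        · exact inf'_le _ (mem_univ i)

/-- Gradient estimate (gr2) for the bubble test functions: the gradient of the
logarithm of the sum of bubbles is bounded by `4 / min_i d(x, x_i)`. -/
theorem bubble_gradient_estimate_dmin
    (k : ℕ) (t : Fin (k + 1) → ℝ) (ht : ∀ i, 0 ≤ t i) (hsum : ∑ i, t i = 1)
    (lam : ℝ) (hlam : 0 < lam)
    (p : Fin (k + 1) → EuclideanSpace ℝ (Fin 2))
    (u : EuclideanSpace ℝ (Fin 2) → ℝ)
    (hu : ∀ y, u y = Real.log (∑ i, t i * ((1 + lam ^ 2 * dist y (p i) ^ 2) ^ 2)⁻¹))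
    (x : EuclideanSpace ℝ (Fin 2))
    (hx : 0 < (univ : Finset (Fin (k + 1))).inf' univ_nonempty (fun i => dist x (p i))) :
    ‖fderiv ℝ u x‖ ≤ 4 / (univ : Finset (Fin (k + 1))).inf' univ_nonempty
      (fun i => dist x (p i)) :=
  bubble_gradient_estimate_dmin_general k t ht hsum lam p u hu x hx
end

section
/- Let f₁, f₂ ∈ L¹(M) be nonnegative with ‖f₁‖₁ = ‖f₂‖₁ = 1, let δ, θ > 0, k ≥ l ≥ 1 natural numbers, and let Ω_{1,1},...,Ω_{1,k} and Ω_{2,1},...,Ω_{2,l} be subsets of a metric measure space M such that d(Ω_{1,i}, Ω_{1,i'}) ≥ δ for i ≠ i', d(Ω_{2,j}, Ω_{2,j'}) ≥ δ for j ≠ j', ∫_{Ω_{1,i}} f₁ ≥ θ for all i, and ∫_{Ω_{2,j}} f₂ ≥ θ for all j. Then there exist δ̄ > 0, θ̄ > 0 (depending only on δ, θ, k, l, M, not on f₁, f₂) and sets Ω₁,...,Ω_k ⊂ M with d(Ω_n, Ω_{n'}) ≥ δ̄ for n ≠ n', ∫_{Ω_n} f₁ ≥ θ̄ for all n = 1,...,k,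 and ∫_{Ω_m} f₂ ≥ θ̄ for all m = 1,...,l. -/
open MeasureTheory

open MeasureTheory

lemma refine_lemma {M : Type*} [MetricSpace M] [MeasurableSpace M] (μ : Measure M)
    {N : ℕ} (C : Fin N → Set M) (S : Set M) (f : M → ℝ)
    (hf : Integrable f μ) (hf0 : ∀ x, 0 ≤ f x) (r θ : ℝ)
    (hθS : θ ≤ ∫ x in S, f x ∂μ)
    (hsep : ∀ i i', i ≠ i' → ∀ a ∈ C i, ∀ b ∈ C i', 2 * r ≤ dist a b) :
    ∃ P : Set M, P ⊆ S ∧ θ / (N + 1) ≤ ∫ x in P, f x ∂μ ∧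
      ∃ o : Option (Fin N), ∀ i : Fin N, o ≠ some i → ∀ x ∈ P, ∀ a ∈ C i, r ≤ dist x a := by
  classical
  set nb : Fin N → Set M := fun i => {x | ∃ a ∈ C i, dist x a < r} with hnb
  set Q : Option (Fin N) → Set M := fun o =>
    match o with
    | some i => S ∩ nb i
    | none => S \ ⋃ i, nb i with hQ
  have hQsub : ∀ o, Q o ⊆ S := by
    intro o
    cases o with
    | some i => exact Set.inter_subset_left
    | none => exact Set.diff_subset
  have hcover : S ⊆ ⋃ o, Q o := by
    intro x hx
    by_cases h : ∃ i, x ∈ nb i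
    · obtain ⟨i, hi⟩ := h
      exact Set.mem_iUnion.mpr ⟨some i, ⟨hx, hi⟩⟩
    · refine Set.mem_iUnion.mpr ⟨none, ⟨hx, ?_⟩⟩
      simpa using h
  -- sum of restricted measures dominates restrict S
  have hle : μ.restrict S ≤ ∑ o : Option (Fin N), μ.restrict (Q o) := by
    rw [Measure.le_iff]
    intro E hE
    rw [Measure.restrict_apply hE]
    have h1 : μ (E ∩ S) ≤ μ (⋃ o, E ∩ Q o) := by
      apply measure_mono
      intro x ⟨hxE, hxS⟩
      obtain ⟨o, ho⟩ := Set.mem_iUnion.mp (hcover hxS)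
      exact Set.mem_iUnion.mpr ⟨o, hxE, ho⟩
    have h2 : μ (⋃ o, E ∩ Q o) ≤ ∑ o : Option (Fin N), μ (E ∩ Q o) := by
      refine le_trans (measure_iUnion_le _) ?_
      rw [tsum_fintype]
    calc μ (E ∩ S) ≤ ∑ o : Option (Fin N), μ (E ∩ Q o) := h1.trans h2
      _ = (∑ o : Option (Fin N), μ.restrict (Q o)) E := by
          rw [Measure.coe_finset_sum]
          simp [Measure.restrict_apply hE]
  have hint : ∀ o : Option (Fin N), Integrable f (μ.restrict (Q o)) := by
    intro o
    exact hf.restrict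
  have hsum : (∫ x in S, f x ∂μ) ≤ ∑ o : Option (Fin N), ∫ x in Q o, f x ∂μ := by
    have h1 : (∫ x in S, f x ∂μ) ≤ ∫ x, f x ∂(∑ o : Option (Fin N), μ.restrict (Q o)) := by
      refine integral_mono_measure hle (Filter.Eventually.of_forall hf0) ?_
      rw [integrable_finset_sum_measure]
      intro o _
      exact hint o
    rwa [integral_finset_sum_measure (fun o _ => hint o)] at h1
  -- some piece has large mass
  have hmain : ∃ o : Option (Fin N), θ / (N + 1) ≤ ∫ x in Q o, f x ∂μ := by
    by_contra h
    push_neg at h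
    have hlt : ∑ o : Option (Fin N), ∫ x in Q o, f x ∂μ <
        ∑ _o : Option (Fin N), θ / (N + 1) := by
      refine Finset.sum_lt_sum_of_nonempty ⟨none, Finset.mem_univ _⟩ ?_
      intro o _
      exact h o
    rw [Finset.sum_const, Finset.card_univ, Fintype.card_option, Fintype.card_fin] at hlt
    have hNpos : (0:ℝ) < (N:ℝ) + 1 := by positivity
    have : (N + 1 : ℕ) • (θ / (N + 1)) = θ := by
      rw [nsmul_eq_mul]
      push_cast
      field_simp
    rw [this] at hlt
    linarith [hθS.trans hsum]
  obtain ⟨o, ho⟩ := hmain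
  refine ⟨Q o, hQsub o, ho, o, ?_⟩
  intro i hoi x hx a ha
  by_contra hlt
  push_neg at hlt
  have hxin : x ∈ nb i := ⟨a, ha, hlt⟩
  cases o with
  | none =>
      exact hx.2 (Set.mem_iUnion.mpr ⟨i, hxin⟩)
  | some i₀ =>
      have hne : i ≠ i₀ := fun h => hoi (by rw [h])
      obtain ⟨a₀, ha₀, hda₀⟩ := hx.2
      have h2r := hsep i i₀ hne a ha a₀ ha₀
      have : dist a a₀ ≤ dist a x + dist x a₀ := dist_triangle a x a₀
      rw [dist_comm a x] at this
      linarith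

lemma extend_partial_injection {l k : ℕ} (hlk : l ≤ k) (m : Fin l → Option (Fin k))
    (hm : ∀ j j' i, m j = some i → m j' = some i → j = j') :
    ∃ g : Fin l → Fin k, Function.Injective g ∧ ∀ j i, m j = some i → g j = i := by
  classical
  set p : Fin k → Prop := fun i => ∃ j, m j = some i with hp
  set q : Fin l → Prop := fun j => (m j).isSome with hq
  -- embedding from used values to defined inputs
  have emb1 : {i : Fin k // p i} ↪ {j : Fin l // q j} := by
    refine ⟨fun x => ⟨x.2.choose, ?_⟩, ?_⟩
    · have := x.2.choose_spec
      simp [hq, this]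
    · intro x y hxy
      have hx := x.2.choose_spec
      have hy := y.2.choose_spec
      have : x.2.choose = y.2.choose := congrArg Subtype.val hxy
      rw [this, hy] at hx
      exact Subtype.ext (Option.some.inj hx).symm
  have hcard1 : Fintype.card {i : Fin k // p i} ≤ Fintype.card {j : Fin l // q j} :=
    Fintype.card_le_of_embedding emb1
  have hcardU : Fintype.card {i : Fin k // ¬ p i} = k - Fintype.card {i : Fin k // p i} := by
    rw [Fintype.card_subtype_compl, Fintype.card_fin]
  have hcardD : Fintype.card {j : Fin l // ¬ q j} = l - Fintype.card {j : Fin l // q j} := by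
    rw [Fintype.card_subtype_compl, Fintype.card_fin]
  have hcard2 : Fintype.card {j : Fin l // ¬ q j} ≤ Fintype.card {i : Fin k // ¬ p i} := by
    rw [hcardU, hcardD]
    have h1 : Fintype.card {j : Fin l // q j} ≤ l := by
      simpa using Fintype.card_subtype_le q
    omega
  obtain ⟨e⟩ := Function.Embedding.nonempty_of_card_le hcard2
  refine ⟨fun j => if h : (m j).isSome then (m j).get h
      else (e ⟨j, fun hq' => h hq'⟩).1, ?_, ?_⟩
  · intro j j' hjj'
    by_cases h : (m j).isSome <;> by_cases h' : (m j').isSome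
    · simp only [dif_pos h, dif_pos h'] at hjj'
      refine hm j j' ((m j).get h) ?_ ?_
      · simp
      · rw [hjj']; simp
    · simp only [dif_pos h, dif_neg h'] at hjj'
      exfalso
      have hpval : p ((m j).get h) := ⟨j, by simp⟩
      have hnp : ¬ p ((e ⟨j', fun hq' => h' hq'⟩).1) := (e _).2
      rw [hjj'] at hpval
      exact hnp hpval
    · simp only [dif_neg h, dif_pos h'] at hjj'
      exfalso
      have hpval : p ((m j').get h') := ⟨j', by simp⟩
      have hnp : ¬ p ((e ⟨j, fun hq' => h hq'⟩).1) := (e _).2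
      rw [← hjj'] at hpval
      exact hnp hpval
    · simp only [dif_neg h, dif_neg h'] at hjj'
      have : (⟨j, fun hq' => h hq'⟩ : {j : Fin l // ¬ q j}) = ⟨j', fun hq' => h' hq'⟩ :=
        e.injective (Subtype.ext hjj')
      exact congrArg Subtype.val this
  · intro j i hji
    have h : (m j).isSome := by simp [hji]
    simp only [dif_pos h]
    simp [hji]

/-- Set-combination lemma used before the improved Moser-Trudinger inequality. -/
theorem set_combination_lemma
    {M : Type*} [MetricSpace M] [MeasurableSpace M] (μ : Measure M)
    (δ θ : ℝ) (hδ : 0 < δ) (hθ : 0 < θ) (k l : ℕ) (hl : 1 ≤ l) (hkl : l ≤ k) :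
    ∃ δb : ℝ, 0 < δb ∧ ∃ θb : ℝ, 0 < θb ∧
      ∀ (f₁ f₂ : M → ℝ), Integrable f₁ μ → Integrable f₂ μ →
        (∀ x, 0 ≤ f₁ x) → (∀ x, 0 ≤ f₂ x) →
        (∫ x, f₁ x ∂μ) = 1 → (∫ x, f₂ x ∂μ) = 1 →
      ∀ (Ω₁ : Fin k → Set M) (Ω₂ : Fin l → Set M),
        (∀ i i', i ≠ i' → ∀ a ∈ Ω₁ i, ∀ b ∈ Ω₁ i', δ ≤ dist a b) →
        (∀ j j', j ≠ j' → ∀ a ∈ Ω₂ j, ∀ b ∈ Ω₂ j', δ ≤ dist a b) →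
        (∀ i, θ ≤ ∫ x in Ω₁ i, f₁ x ∂μ) →
        (∀ j, θ ≤ ∫ x in Ω₂ j, f₂ x ∂μ) →
        ∃ Ω : Fin k → Set M,
          (∀ n n', n ≠ n' → ∀ a ∈ Ω n, ∀ b ∈ Ω n', δb ≤ dist a b) ∧
          (∀ n, θb ≤ ∫ x in Ω n, f₁ x ∂μ) ∧
          (∀ m : Fin k, (m : ℕ) < l → θb ≤ ∫ x in Ω m, f₂ x ∂μ) := by
  classical
  refine ⟨δ / 3, by linarith, θ / (k + 1), by positivity, ?_⟩
  intro f₁ f₂ hf₁ hf₂ hf₁0 hf₂0 _hint₁ _hint₂ Ω₁ Ω₂ hsep₁ hsep₂ hmass₁ hmass₂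
  -- Round I: refine each Ω₂ j against the family Ω₁
  have hsepΩ₁ : ∀ i i', i ≠ i' → ∀ a ∈ Ω₁ i, ∀ b ∈ Ω₁ i', 2 * (δ / 3) ≤ dist a b := by
    intro i i' h a ha b hb
    have := hsep₁ i i' h a ha b hb
    linarith
  have h1 : ∀ j : Fin l, ∃ P : Set M, P ⊆ Ω₂ j ∧ θ / (k + 1) ≤ ∫ x in P, f₂ x ∂μ ∧
      ∃ o : Option (Fin k), ∀ i : Fin k, o ≠ some i → ∀ x ∈ P, ∀ a ∈ Ω₁ i, δ / 3 ≤ dist x a :=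
    fun j => refine_lemma μ Ω₁ (Ω₂ j) f₂ hf₂ hf₂0 (δ / 3) θ (hmass₂ j) hsepΩ₁
  choose B hBsub hBmass ψ hψ using h1
  -- Round II: refine each Ω₁ i against the family B
  have hsepB : ∀ j j', j ≠ j' → ∀ a ∈ B j, ∀ b ∈ B j', 2 * (δ / 3) ≤ dist a b := by
    intro j j' h a ha b hb
    have := hsep₂ j j' h a (hBsub j ha) b (hBsub j' hb)
    linarith
  have h2 : ∀ i : Fin k, ∃ P : Set M, P ⊆ Ω₁ i ∧ θ / (l + 1) ≤ ∫ x in P, f₁ x ∂μ ∧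
      ∃ o : Option (Fin l), ∀ j : Fin l, o ≠ some j → ∀ x ∈ P, ∀ a ∈ B j, δ / 3 ≤ dist x a :=
    fun i => refine_lemma μ B (Ω₁ i) f₁ hf₁ hf₁0 (δ / 3) θ (hmass₁ i) hsepB
  choose A hAsub hAmass φ hφ using h2
  -- partial matching
  set mt : Fin l → Option (Fin k) := fun j =>
    (ψ j).bind (fun i => if φ i = some j then some i else none) with hmt_def
  have hmt : ∀ j i, mt j = some i → ψ j = some i ∧ φ i = some j := by
    intro j i h
    replace h : (ψ j).bind (fun i => if φ i = some j then some i else none) = some i := h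
    cases hψj : ψ j with
    | none => rw [hψj] at h; simp at h
    | some i' =>
        rw [hψj] at h
        replace h : (if φ i' = some j then some i' else none) = some i := h
        by_cases hc : φ i' = some j
        · rw [if_pos hc] at h
          obtain rfl : i' = i := Option.some.inj h
          exact ⟨rfl, hc⟩
        · rw [if_neg hc] at h; exact absurd h (by simp)
  have hminj : ∀ j j' i, mt j = some i → mt j' = some i → j = j' := by
    intro j j' i h h'
    have := (hmt j i h).2
    have h2 := (hmt j' i h').2
    rw [this] at h2
    exact Option.some.inj h2
  obtain ⟨g, hginj, hg⟩ := extend_partial_injection hkl mt hminj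
  -- extend g to an injection of Fin k
  set mt2 : Fin k → Option (Fin k) := fun n =>
    if h : (n : ℕ) < l then some (g ⟨n, h⟩) else none with hmt2_def
  have hm2inj : ∀ n n' i, mt2 n = some i → mt2 n' = some i → n = n' := by
    intro n n' i h h'
    rw [hmt2_def] at h h'
    simp only at h h'
    by_cases hn : (n : ℕ) < l
    · by_cases hn' : (n' : ℕ) < l
      · rw [dif_pos hn] at h
        rw [dif_pos hn'] at h'
        have e1 := Option.some.inj h
        have e2 := Option.some.inj h'
        have heq : (⟨(n : ℕ), hn⟩ : Fin l) = ⟨(n' : ℕ), hn'⟩ := hginj (by rw [e1, e2])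
        exact Fin.ext (congrArg (fun x : Fin l => (x : ℕ)) heq)
      · rw [dif_neg hn'] at h'; exact absurd h' (by simp)
    · rw [dif_neg hn] at h; exact absurd h (by simp)
  obtain ⟨g', hg'inj, hg'⟩ := extend_partial_injection (le_refl k) mt2 hm2inj
  -- key cross separation
  have hcross : ∀ (i : Fin k) (j : Fin l), mt j ≠ some i →
      ∀ x ∈ A i, ∀ y ∈ B j, δ / 3 ≤ dist x y := by
    intro i j hne x hx y hy
    by_contra hlt
    push_neg at hlt
    have hφi : φ i = some j := by
      by_contra hc
      have := hφ i j (fun h => hc h) x hx y hy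
      linarith
    have hψj : ψ j = some i := by
      by_contra hc
      have := hψ j i (fun h => hc h) y hy x (hAsub i hx)
      rw [dist_comm] at this
      linarith
    apply hne
    rw [hmt_def]
    simp only
    rw [hψj]
    simp [hφi]
  -- the combined sets
  set Ω : Fin k → Set M := fun n =>
    A (g' n) ∪ (if h : (n : ℕ) < l then B ⟨n, h⟩ else ∅) with hΩ_def
  have hAin : ∀ n, A (g' n) ⊆ Ω n := fun n => Set.subset_union_left
  have hBin : ∀ (n : Fin k) (h : (n : ℕ) < l), B ⟨n, h⟩ ⊆ Ω n := by
    intro n h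
    rw [hΩ_def]
    simp only [dif_pos h]
    exact Set.subset_union_right
  -- relation between g' and matched pairs
  have hg'match : ∀ (n : Fin k) (h : (n : ℕ) < l), g' n = g ⟨n, h⟩ := by
    intro n h
    exact hg' n (g ⟨n, h⟩) (by rw [hmt2_def]; simp [h])
  refine ⟨Ω, ?_, ?_, ?_⟩
  · -- separation
    intro n n' hne a ha b hb
    have hsplit : ∀ (p : Fin k) (x : M), x ∈ Ω p →
        x ∈ A (g' p) ∨ ∃ h : (p : ℕ) < l, x ∈ B ⟨p, h⟩ := by
      intro p x hx
      rw [hΩ_def] at hx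
      simp only [Set.mem_union] at hx
      rcases hx with hx | hx
      · exact Or.inl hx
      · by_cases h : (p : ℕ) < l
        · rw [dif_pos h] at hx; exact Or.inr ⟨h, hx⟩
        · rw [dif_neg h] at hx; exact absurd hx (Set.notMem_empty x)
    have hAB : ∀ (p p' : Fin k), p ≠ p' → ∀ x ∈ A (g' p),
        ∀ (h' : (p' : ℕ) < l), ∀ y ∈ B ⟨p', h'⟩, δ / 3 ≤ dist x y := by
      intro p p' hpp' x hx h' y hy
      refine hcross (g' p) ⟨p', h'⟩ ?_ x hx y hy
      intro hmteq
      have : g ⟨p', h'⟩ = g' p := hg ⟨p', h'⟩ (g' p) hmteq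
      rw [← hg'match p' h'] at this
      exact hpp' (hg'inj this.symm)
    rcases hsplit n a ha with haA | ⟨hnl, haB⟩ <;> rcases hsplit n' b hb with hbA | ⟨hn'l, hbB⟩
    · have hgg : g' n ≠ g' n' := fun h => hne (hg'inj h)
      have := hsep₁ (g' n) (g' n') hgg a (hAsub _ haA) b (hAsub _ hbA)
      linarith
    · exact hAB n n' hne a haA hn'l b hbB
    · have := hAB n' n (Ne.symm hne) b hbA hnl a haB
      rw [dist_comm] at this
      exact this
    · have hjj : (⟨(n : ℕ), hnl⟩ : Fin l) ≠ ⟨(n' : ℕ), hn'l⟩ := by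
        intro h
        exact hne (Fin.ext (congrArg (fun x : Fin l => (x : ℕ)) h))
      have := hsep₂ _ _ hjj a (hBsub _ haB) b (hBsub _ hbB)
      linarith
  · -- f₁ mass
    intro n
    have h1 : θ / (k + 1) ≤ θ / (l + 1) := by
      apply div_le_div_of_nonneg_left hθ.le (by positivity)
      have : (l : ℝ) ≤ k := by exact_mod_cast hkl
      linarith
    refine h1.trans ((hAmass (g' n)).trans ?_)
    refine setIntegral_mono_set hf₁.integrableOn
      (Filter.Eventually.of_forall hf₁0) ?_
    exact Filter.Eventually.of_forall (hAin n)
  · -- f₂ mass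
    intro m hm
    refine (hBmass ⟨m, hm⟩).trans ?_
    refine setIntegral_mono_set hf₂.integrableOn
      (Filter.Eventually.of_forall hf₂0) ?_
    exact Filter.Eventually.of_forall (hBin m hm)
end
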